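/- arXiv:1811.08894 — 2 statements merged into one kernel-verified Lean document; each statement's English description precedes it below -/
import Mathlib

section
/- Let n ≥ 1, N = 2^n, r = 2^s with 0 ≤ s ≤ n−1, and let the shift satisfy N/2 ≤ l < N/2 + 2^s. Then the periodic state Ψ^n_{l,r} is separable and equals |1⟩ ⊗ |+⟩^{⊗(n−s−1)} ⊗ |l − N/2⟩^{[s]}: explicitly, Ψ^n_{l,r} x = 1/√(2^{n−s−1}) if x ≥ N/2 and x ≡ l (mod 2^s), and 0 otherwise, and this amplitude function factorizes as a product over the n qubits. -/
open scoped BigOperators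

noncomputable section

/-- `bit n i x` is the i-th binary digit of `x`, counted from the most significant. -/
def bit (n : ℕ) (i : Fin n) (x : Fin (2^n)) : Fin 2 :=
  ⟨((x : ℕ) / 2^(n - 1 - (i : ℕ))) % 2, Nat.mod_lt _ (by norm_num)⟩

/-- An n-qubit state is separable if its amplitudes factor as a product over the qubits. -/
def Separable (n : ℕ) (ψ : Fin (2^n) → ℂ) : Prop :=
  ∃ v : Fin n → Fin 2 → ℂ, ∀ x, ψ x = ∏ i, v i (bit n i x)

/-- The periodic state with shift `l` and period `r`:
amplitude `1/√A` at `x = l + i·r` for `0 ≤ i < A`, with `A = ⌈(2^n - l)/r⌉`. -/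
def periodicState (n l r : ℕ) : Fin (2^n) → ℂ := fun x =>
  if ∃ i < (2^n - l + r - 1) / r, (x : ℕ) = l + i * r
  then (1 : ℂ) / Real.sqrt (((2^n - l + r - 1) / r : ℕ)) else 0

/-- Quantum Fourier transform of an n-qubit state. -/
def QFT (n : ℕ) (ψ : Fin (2^n) → ℂ) : Fin (2^n) → ℂ := fun y =>
  (1 / (Real.sqrt (2^n) : ℝ) : ℂ) * ∑ x : Fin (2^n),
    Complex.exp (2 * Real.pi * Complex.I * (x : ℕ) * (y : ℕ) / ((2^n : ℕ) : ℂ)) * ψ x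

/-- The generalized GHZ state. -/
def GHZ (n : ℕ) : Fin (2^n) → ℂ := fun x =>
  if (x : ℕ) = 0 ∨ (x : ℕ) = 2^n - 1 then (1 : ℂ) / Real.sqrt 2 else 0

/-- SLOCC equivalence of two n-qubit states. -/
def SLOCCEquiv (n : ℕ) (ψ φ : Fin (2^n) → ℂ) : Prop :=
  ∃ (g : Fin n → Matrix (Fin 2) (Fin 2) ℂ) (c : ℂ),
    c ≠ 0 ∧ (∀ i, IsUnit (g i)) ∧
    ∀ x, φ x = c * ∑ y : Fin (2^n), (∏ i, g i (bit n i x) (bit n i y)) * ψ y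

/-!
Since `2^s ∣ N/2` and `N/2 ≤ l < N/2 + 2^s`, the progression `l, l + 2^s, …` of length `A` runs
exactly through the `x ∈ [N/2, N)` with `x ≡ l (mod 2^s)`, and `A = 2^(n-s-1)`. Membership in this
set says that the leading qubit of `x` is `1` and its `s` trailing qubits agree with those of `l`,
the other qubits being free, so the amplitude is a product of one-qubit factors; the constant
`1/√A` is carried by the leading qubit.
-/

theorem Nat.mod_two_pow_eq_iff {x y s : ℕ} :
    x % 2 ^ s = y % 2 ^ s ↔ ∀ j < s, x / 2 ^ j % 2 = y / 2 ^ j % 2 := by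
  have digit_iff : ∀ j, x / 2 ^ j % 2 = y / 2 ^ j % 2 ↔ x.testBit j = y.testBit j := by
    intro j
    simp only [Nat.testBit_eq_decide_div_mod_eq, decide_eq_decide]
    omega
  simp only [digit_iff]
  constructor
  · intro h j hj
    simpa [Nat.testBit_mod_two_pow, hj] using congrArg (Nat.testBit · j) h
  · intro h
    refine Nat.eq_of_testBit_eq fun j => ?_
    by_cases hj : j < s <;> simp [Nat.testBit_mod_two_pow, hj, h]

theorem exists_lt_eq_add_mul_iff {H R l x : ℕ} (hR : R ∣ H) (hl₁ : H ≤ l)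
    (hl₂ : l < H + R) (hx : x < 2 * H) :
    (∃ i < H / R, x = l + i * R) ↔ H ≤ x ∧ x % R = l % R := by
  obtain ⟨C, rfl⟩ := hR
  have hRpos : 0 < R := by omega
  have hC : R * C / R = C := Nat.mul_div_cancel_left C hRpos
  have hl : l % R = l - R * C := by
    rw [show l = R * C + (l - R * C) by omega, Nat.mul_add_mod, Nat.mod_eq_of_lt (by omega)]
    omega
  rw [hC]
  constructor
  · rintro ⟨i, -, rfl⟩
    exact ⟨by omega, Nat.add_mul_mod_self_right l i R⟩
  · rintro ⟨hx₁, hx₂⟩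
    have hq₁ : C ≤ x / R := (Nat.le_div_iff_mul_le hRpos).2 (by linarith)
    have hq₂ : x / R < 2 * C := (Nat.div_lt_iff_lt_mul hRpos).2 (by linarith)
    refine ⟨x / R - C, by omega, ?_⟩
    have hdiv : x / R * R + (l - R * C) = x := hl ▸ hx₂ ▸ Nat.div_add_mod' x R
    have hCR : R * C ≤ x / R * R := mul_comm C R ▸ Nat.mul_le_mul_right R hq₁
    rw [Nat.sub_mul, mul_comm C R]
    omega

theorem periodicState_count {H R l : ℕ} (hH : 0 < H) (hR : R ∣ H) (hl₁ : H ≤ l)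
    (hl₂ : l < H + R) : (2 * H - l + R - 1) / R = H / R := by
  have := Nat.le_of_dvd hH hR
  rw [show 2 * H - l + R - 1 = H + (H + R - 1 - l) by omega, Nat.add_div_of_dvd_right hR,
    Nat.div_eq_of_lt (a := H + R - 1 - l) (by omega), add_zero]

theorem periodicState_apply_of_dvd {n l R : ℕ} (hn : 1 ≤ n) (hR : R ∣ 2 ^ (n - 1))
    (hl₁ : 2 ^ (n - 1) ≤ l) (hl₂ : l < 2 ^ (n - 1) + R) (x : Fin (2 ^ n)) :
    periodicState n l R x = if 2 ^ (n - 1) ≤ (x : ℕ) ∧ (x : ℕ) % R = l % R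
      then (1 : ℂ) / Real.sqrt ((2 ^ (n - 1) / R : ℕ)) else 0 := by
  have h2n : 2 ^ n = 2 * 2 ^ (n - 1) := by rw [← pow_succ']; congr 1; omega
  have hx : (x : ℕ) < 2 * 2 ^ (n - 1) := h2n ▸ x.isLt
  simp only [periodicState, h2n, periodicState_count (by positivity) hR hl₁ hl₂,
    exists_lt_eq_add_mul_iff hR hl₁ hl₂ hx]

theorem Separable.mul {n : ℕ} {ψ φ : Fin (2 ^ n) → ℂ} (hψ : Separable n ψ)
    (hφ : Separable n φ) : Separable n (fun x => ψ x * φ x) := by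
  obtain ⟨v, hv⟩ := hψ
  obtain ⟨w, hw⟩ := hφ
  exact ⟨fun i b => v i b * w i b, fun x => by simp only [hv, hw, Finset.prod_mul_distrib]⟩

theorem separable_one (n : ℕ) : Separable n (fun _ => 1) :=
  ⟨fun _ _ => 1, fun _ => by simp⟩

theorem Separable.finset_prod {n : ℕ} {ι : Type*} (t : Finset ι)
    {ψ : ι → Fin (2 ^ n) → ℂ} (h : ∀ i ∈ t, Separable n (ψ i)) :
    Separable n (fun x => ∏ i ∈ t, ψ i x) := by
  classical
  induction t using Finset.induction_on with
  | empty => simpa using separable_one n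
  | insert a t ha ih =>
    simp only [Finset.prod_insert ha]
    exact (h a (t.mem_insert_self a)).mul (ih fun i hi => h i (Finset.mem_insert_of_mem hi))

theorem separable_comp_bit {n : ℕ} (i : Fin n) (f : Fin 2 → ℂ) :
    Separable n (fun x => f (bit n i x)) := by
  classical
  refine ⟨fun j => if j = i then f else fun _ => 1, fun x => ?_⟩
  rw [Finset.prod_eq_single i (fun j _ hj => by simp [hj]) (by simp)]
  simp

theorem val_bit_sub_one_sub {n j : ℕ} (hj : j < n) (x : Fin (2 ^ n)) :
    (bit n ⟨n - 1 - j, by omega⟩ x : ℕ) = x / 2 ^ j % 2 := by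
  simp only [bit]
  congr 3
  omega

theorem bit_zero_eq_one_iff {n : ℕ} (hn : 0 < n) (x : Fin (2 ^ n)) :
    bit n ⟨0, hn⟩ x = 1 ↔ 2 ^ (n - 1) ≤ (x : ℕ) := by
  have hx : (x : ℕ) < 2 ^ (n - 1) * 2 := by rw [← pow_succ, Nat.sub_add_cancel hn]; exact x.isLt
  have hq : (x : ℕ) / 2 ^ (n - 1) < 2 := Nat.div_lt_of_lt_mul hx
  rw [Fin.ext_iff, ← Nat.one_le_div_iff (by positivity)]
  simp only [bit, Nat.sub_zero, Fin.val_one]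
  rw [Nat.mod_eq_of_lt hq]
  omega

theorem separable_ite_le_and_mod_two_pow {n s : ℕ} (hn : 0 < n) (hs : s ≤ n) (m : ℕ)
    (c : ℂ) :
    Separable n (fun x => if 2 ^ (n - 1) ≤ (x : ℕ) ∧ (x : ℕ) % 2 ^ s = m % 2 ^ s
      then c else 0) := by
  have factor : ∀ x : Fin (2 ^ n),
      (if 2 ^ (n - 1) ≤ (x : ℕ) ∧ (x : ℕ) % 2 ^ s = m % 2 ^ s then c else 0) =
        (if bit n ⟨0, hn⟩ x = 1 then c else 0) *
          ∏ j : Fin s, if (bit n ⟨n - 1 - j, by omega⟩ x : ℕ) = m / 2 ^ (j : ℕ) % 2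
            then 1 else 0 := by
    intro x
    simp only [Fintype.prod_boole, bit_zero_eq_one_iff, Nat.mod_two_pow_eq_iff]
    simp only [val_bit_sub_one_sub (lt_of_lt_of_le (Fin.isLt _) hs), Fin.forall_iff]
    split_ifs <;> simp_all
  simp only [factor]
  exact (separable_comp_bit ⟨0, hn⟩ fun b => if b = 1 then c else 0).mul <|
    Separable.finset_prod (Finset.univ : Finset (Fin s)) fun j _ =>
      separable_comp_bit (n := n) ⟨n - 1 - j, by omega⟩
        fun b => if (b : ℕ) = m / 2 ^ (j : ℕ) % 2 then 1 else 0

/-- for `r = 2^s` with `s ≤ n−1` and `N/2 ≤ l < N/2 + 2^s`, the periodic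
state equals `|1⟩ ⊗ |+⟩^{⊗(n−s−1)} ⊗ |l−N/2⟩^{[s]}` and is separable. -/
theorem stmt_5 (n s l : ℕ) (hn : 1 ≤ n) (hs : s ≤ n - 1)
    (hl1 : 2^(n-1) ≤ l) (hl2 : l < 2^(n-1) + 2^s) :
    (∀ x : Fin (2^n), periodicState n l (2^s) x =
      if 2^(n-1) ≤ (x : ℕ) ∧ (x : ℕ) % 2^s = l % 2^s
      then (1 : ℂ) / Real.sqrt (2^(n-s-1)) else 0) ∧
    Separable n (periodicState n l (2^s)) := by
  have amplitude : ∀ x : Fin (2^n), periodicState n l (2^s) x =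
      if 2^(n-1) ≤ (x : ℕ) ∧ (x : ℕ) % 2^s = l % 2^s
      then (1 : ℂ) / Real.sqrt (2^(n-s-1)) else 0 := by
    intro x
    rw [periodicState_apply_of_dvd hn (Nat.pow_dvd_pow 2 hs) hl1 hl2,
      Nat.pow_div hs two_pos, Nat.sub_right_comm]
    push_cast
    rfl
  refine ⟨amplitude, ?_⟩
  rw [show periodicState n l (2^s) = _ from funext amplitude]
  exact separable_ite_le_and_mod_two_pow hn (by omega) l _
end
end

section
/- Let n ≥ 2 and suppose an n-qubit state ψ : Fin (2^n) → ℂ is a sum of two product states, ψ x = ∏_{i<n} u i (bit i x) + ∏_{i<n} w i (bit i x), where for every i < n the two vectors u i and w i in ℂ² are linearly independent. Then ψ is SLOCC-equivalent to GHZ_n. -/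
open scoped BigOperators

noncomputable section

lemma bit_inj {n : ℕ} {x y : Fin (2^n)} (h : ∀ i, bit n i x = bit n i y) : x = y := by
  apply Fin.ext
  apply Nat.eq_of_testBit_eq
  intro j
  by_cases hj : j < n
  · have hi : n - 1 - (n - 1 - j) = j := by omega
    have h2 := congrArg Fin.val (h ⟨n - 1 - j, by omega⟩)
    simp only [bit] at h2
    rw [hi] at h2
    rw [Nat.testBit_eq_decide_div_mod_eq, Nat.testBit_eq_decide_div_mod_eq, h2]
  · rw [Nat.testBit_lt_two_pow, Nat.testBit_lt_two_pow]
    · exact lt_of_lt_of_le y.isLt (Nat.pow_le_pow_right (by norm_num) (le_of_not_gt hj))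
    · exact lt_of_lt_of_le x.isLt (Nat.pow_le_pow_right (by norm_num) (le_of_not_gt hj))

lemma bit_zero' {n : ℕ} (i : Fin n) {x : Fin (2^n)} (hx : (x : ℕ) = 0) : bit n i x = 0 := by
  apply Fin.ext
  simp [bit, hx]

lemma bit_last' {n : ℕ} (i : Fin n) {x : Fin (2^n)} (hx : (x : ℕ) = 2^n - 1) :
    bit n i x = 1 := by
  apply Fin.ext
  have ht : Nat.testBit (2^n - 1) (n - 1 - (i : ℕ)) = true := by
    simp only [Nat.testBit_two_pow_sub_one, decide_eq_true_eq]
    omega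
  rw [Nat.testBit_eq_decide_div_mod_eq, decide_eq_true_eq] at ht
  show (x : ℕ) / 2^(n - 1 - (i : ℕ)) % 2 = 1
  rw [hx]; exact ht

lemma key_sum {n : ℕ} (f : Fin n → Fin 2 → ℂ) :
    ∑ y : Fin (2^n), ∏ i, f i (bit n i y) = ∏ i, ∑ b, f i b := by
  have hbij : Function.Bijective (fun (y : Fin (2^n)) => fun i => bit n i y) := by
    rw [Fintype.bijective_iff_injective_and_card]
    constructor
    · intro y z h
      exact bit_inj (fun i => congrFun h i)
    · simp
  rw [Fintype.prod_sum]
  exact Fintype.sum_bijective _ hbij _ _ (fun y => rfl)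

/-- a sum of two product states whose local factors are everywhere
linearly independent is SLOCC-equivalent to `GHZ_n`. -/
theorem stmt_12 (n : ℕ) (hn : 2 ≤ n) (u w : Fin n → Fin 2 → ℂ)
    (hind : ∀ i, LinearIndependent ℂ ![u i, w i])
    (ψ : Fin (2^n) → ℂ)
    (hψ : ∀ x, ψ x = (∏ i, u i (bit n i x)) + ∏ i, w i (bit n i x)) :
    SLOCCEquiv n ψ (GHZ n) := by
  classical
  set M : Fin n → Matrix (Fin 2) (Fin 2) ℂ := fun i => (Matrix.of ![u i, w i]).transpose with hMdef
  have hM : ∀ i, IsUnit (M i) := by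
    intro i
    rw [Matrix.isUnit_transpose]
    exact Matrix.linearIndependent_rows_iff_isUnit.mp (hind i)
  have hMdet : ∀ i, IsUnit (M i).det := fun i => (Matrix.isUnit_iff_isUnit_det _).mp (hM i)
  set g : Fin n → Matrix (Fin 2) (Fin 2) ℂ := fun i => (M i)⁻¹ with hgdef
  have hg1 : ∀ i, g i * M i = 1 := fun i => Matrix.nonsing_inv_mul _ (hMdet i)
  have hgu : ∀ i a, ∑ b, g i a b * u i b = (1 : Matrix (Fin 2) (Fin 2) ℂ) a 0 := by
    intro i a
    rw [← hg1 i, Matrix.mul_apply]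
    refine Finset.sum_congr rfl fun b _ => ?_
    congr 1
  have hgw : ∀ i a, ∑ b, g i a b * w i b = (1 : Matrix (Fin 2) (Fin 2) ℂ) a 1 := by
    intro i a
    rw [← hg1 i, Matrix.mul_apply]
    refine Finset.sum_congr rfl fun b _ => ?_
    congr 1
  have hsum : ∀ x : Fin (2^n),
      ∑ y : Fin (2^n), (∏ i, g i (bit n i x) (bit n i y)) * ψ y
        = (∏ i, (1 : Matrix (Fin 2) (Fin 2) ℂ) (bit n i x) 0)
          + ∏ i, (1 : Matrix (Fin 2) (Fin 2) ℂ) (bit n i x) 1 := by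
    intro x
    calc ∑ y : Fin (2^n), (∏ i, g i (bit n i x) (bit n i y)) * ψ y
        = ∑ y : Fin (2^n),
            ((∏ i, (fun b => g i (bit n i x) b * u i b) (bit n i y))
              + ∏ i, (fun b => g i (bit n i x) b * w i b) (bit n i y)) := by
          refine Finset.sum_congr rfl fun y _ => ?_
          rw [hψ y, mul_add, Finset.prod_mul_distrib, Finset.prod_mul_distrib]
      _ = (∑ y : Fin (2^n), ∏ i, (fun b => g i (bit n i x) b * u i b) (bit n i y))
            + ∑ y : Fin (2^n), ∏ i, (fun b => g i (bit n i x) b * w i b) (bit n i y) := by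
          rw [Finset.sum_add_distrib]
      _ = (∏ i, ∑ b, g i (bit n i x) b * u i b) + ∏ i, ∑ b, g i (bit n i x) b * w i b := by
          rw [key_sum fun i b => g i (bit n i x) b * u i b, key_sum fun i b => g i (bit n i x) b * w i b]
      _ = (∏ i, (1 : Matrix (Fin 2) (Fin 2) ℂ) (bit n i x) 0)
            + ∏ i, (1 : Matrix (Fin 2) (Fin 2) ℂ) (bit n i x) 1 := by
          simp_rw [hgu, hgw]
  have hs2 : (Real.sqrt 2 : ℝ) ≠ 0 := by positivity
  refine ⟨g, (1 : ℂ) / (Real.sqrt 2 : ℝ), ?_, ?_, ?_⟩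
  · simp [hs2]
  · intro i
    exact Matrix.isUnit_nonsing_inv_iff.mpr (hM i)
  · intro x
    rw [hsum x]
    have hx0 : (0 : Fin (2^n)) = ⟨0, by positivity⟩ := by
      apply Fin.ext; simp
    by_cases h0 : (x : ℕ) = 0
    · have hb : ∀ i, bit n i x = 0 := fun i => bit_zero' i h0
      have h1 : (∏ i, (1 : Matrix (Fin 2) (Fin 2) ℂ) (bit n i x) 0) = 1 := by
        simp [hb, Matrix.one_apply]
      have h2 : (∏ i, (1 : Matrix (Fin 2) (Fin 2) ℂ) (bit n i x) 1) = 0 := by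
        refine Finset.prod_eq_zero (Finset.mem_univ (⟨0, by omega⟩ : Fin n)) ?_
        simp [hb, Matrix.one_apply]
      rw [h1, h2, GHZ, if_pos (Or.inl h0)]
      ring
    · by_cases h1 : (x : ℕ) = 2^n - 1
      · have hb : ∀ i, bit n i x = 1 := fun i => bit_last' i h1
        have ha : (∏ i, (1 : Matrix (Fin 2) (Fin 2) ℂ) (bit n i x) 0) = 0 := by
          refine Finset.prod_eq_zero (Finset.mem_univ (⟨0, by omega⟩ : Fin n)) ?_
          simp [hb, Matrix.one_apply]
        have hc : (∏ i, (1 : Matrix (Fin 2) (Fin 2) ℂ) (bit n i x) 1) = 1 := by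
          simp [hb, Matrix.one_apply]
        rw [ha, hc, GHZ, if_pos (Or.inr h1)]
        ring
      · have hnb0 : ¬ ∀ i, bit n i x = 0 := by
          intro h
          apply h0
          have : x = ⟨0, by positivity⟩ := bit_inj (fun i => by
            rw [h i, bit_zero' i (x := (⟨0, by positivity⟩ : Fin (2^n))) rfl])
          rw [this]
        have hnb1 : ¬ ∀ i, bit n i x = 1 := by
          intro h
          apply h1
          have hlt : 2^n - 1 < 2^n := by
            have : 0 < 2^n := by positivity
            omega
          have : x = ⟨2^n - 1, hlt⟩ := bit_inj (fun i => by
            rw [h i, bit_last' i (x := (⟨2^n - 1, hlt⟩ : Fin (2^n))) rfl])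
          rw [this]
        push_neg at hnb0 hnb1
        obtain ⟨i0, hi0⟩ := hnb0
        obtain ⟨i1, hi1⟩ := hnb1
        have ha : (∏ i, (1 : Matrix (Fin 2) (Fin 2) ℂ) (bit n i x) 0) = 0 := by
          refine Finset.prod_eq_zero (Finset.mem_univ i0) ?_
          simp [Matrix.one_apply, hi0]
        have hc : (∏ i, (1 : Matrix (Fin 2) (Fin 2) ℂ) (bit n i x) 1) = 0 := by
          refine Finset.prod_eq_zero (Finset.mem_univ i1) ?_
          simp [Matrix.one_apply, hi1]
        rw [ha, hc, GHZ, if_neg (by tauto)]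
        ring
end
end
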